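/- arXiv:2303.05738 — 4 statements merged into one kernel-verified Lean document; each statement's English description precedes it below -/
import Mathlib

section
/- Let n ≥ 1, K0 > 0, G ≥ 0. Let L : ℝⁿ × ℝⁿ × ℝⁿ → ℝ be continuous, ℤⁿ-periodic in its second argument, convex in its third argument, and satisfy |v|²/2 − K0 ≤ L(x,y,v) ≤ |v|²/2 + K0 for all x, y, v ∈ ℝⁿ. Let g : ℝⁿ → ℝ be Lipschitz with constant at most G. Then there exists a constant M0 > 0 depending only on n, K0 and G with the following property: for every x ∈ ℝⁿ, t > 0, ε > 0, if γ : [0,t] → ℝⁿ is absolutely continuous with γ(0) = x and ∫₀ᵗ L(γ(s), γ(s)/ε, −γ̇(s)) ds + g(γ(t)) ≤ ∫₀ᵗ L(η(s), η(s)/ε, −η̇(s)) ds + g(η(t)) for every absolutely continuous η : [0,t] → ℝⁿ with η(0) = x (i.e. γ is a minimizing curve for the control functional), then |γ̇(s)| ≤ M0 for almost every s ∈ [0,t]. -/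
/-!
Compare a minimizer `γ` with the curve that runs through `γ|[c, d]` at half speed and then
follows `γ` with delay `d - c`; it is again defined on `[0, t]`, but ends at `γ (t - (d - c))`.
At half speed the kinetic part `∫_c^d |γ'|² / 2` of the action is halved, while the quadratic
bounds on `L` make every other change `O(d - c)`: the action dropped on the final interval of
length `d - c` dominates the change of `g` there, by the Lipschitz bound and Young's inequality
`G |v| ≤ |v|² / 2 + G² / 2`. Hence `∫_c^d |γ'|² ≤ (16 K0 + 2 G²) (d - c)` whenever
`2d - c ≤ t`, and Lebesgue's differentiation theorem turns this into `|γ'|² ≤ 16 K0 + 2 G²`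
almost everywhere.
-/

open MeasureTheory Real Set

noncomputable section

/-- `ℝⁿ` with the Euclidean norm. -/
abbrev E (n : ℕ) : Type := EuclideanSpace ℝ (Fin n)

/-- A vector in `ℝⁿ` with integer coordinates. -/
def intVec (n : ℕ) (k : Fin n → ℤ) : E n := WithLp.toLp 2 (fun i => (k i : ℝ))

/-- `γ : [a,b] → ℝⁿ` is absolutely continuous with (a.e.) derivative `γ'`. -/
def IsAC {n : ℕ} (a b : ℝ) (γ γ' : ℝ → E n) : Prop :=
  IntegrableOn γ' (Icc a b) volume ∧
    ∀ c d : ℝ, a ≤ c → c ≤ d → d ≤ b → γ d - γ c = ∫ s in c..d, γ' s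

open Filter Topology intervalIntegral

theorem IntervalIntegrable.comp_mul_add {F : Type*} [NormedAddCommGroup F] {f : ℝ → F}
    {a b a' b' α β : ℝ} (hf : IntervalIntegrable f volume a' b') (hα : α ≠ 0)
    (ha : α * a + β = a') (hb : α * b + β = b') :
    IntervalIntegrable (fun s => f (α * s + β)) volume a b := by
  subst ha hb
  simpa [hα] using (hf.comp_add_right β).comp_mul_left (c := α)

theorem IntervalIntegrable.mono_of_le {F : Type*} [NormedAddCommGroup F] {f : ℝ → F}
    {a b c d : ℝ} (hf : IntervalIntegrable f volume a b) (hac : a ≤ c) (hcd : c ≤ d)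
    (hdb : d ≤ b) : IntervalIntegrable f volume c d :=
  hf.mono_set (by
    rw [uIcc_of_le hcd, uIcc_of_le (hac.trans (hcd.trans hdb))]; exact Icc_subset_Icc hac hdb)

section Piecewise

variable {F : Type*} {f₁ f₂ : ℝ → F} {a b c : ℝ}

theorem piecewise_Iic_apply_of_le (hb : f₁ b = f₂ b) {s : ℝ} (hbs : b ≤ s) :
    (Iic b).piecewise f₁ f₂ s = f₂ s := by
  rcases hbs.eq_or_lt with rfl | hbs
  · simpa using hb
  · exact piecewise_eq_of_notMem _ _ _ (not_le.2 hbs)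

theorem eqOn_piecewise_Iic_left (hab : a ≤ b) (hbc : b ≤ c) :
    EqOn ((Iic c).piecewise f₁ f₂) f₁ (uIoo a b) :=
  (piecewise_eqOn _ _ _).mono fun _ hs => by
    rw [uIoo_of_le hab] at hs; exact hs.2.le.trans hbc

theorem eqOn_piecewise_Iic_right (hbc : b ≤ c) : EqOn ((Iic b).piecewise f₁ f₂) f₂ (uIoo b c) :=
  (piecewise_eqOn_compl _ _ _).mono fun _ hs => by
    rw [uIoo_of_le hbc] at hs; exact not_le.2 hs.1

theorem IntervalIntegrable.piecewise_Iic [NormedAddCommGroup F]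
    (h₁ : IntervalIntegrable f₁ volume a b) (h₂ : IntervalIntegrable f₂ volume b c)
    (hab : a ≤ b) (hbc : b ≤ c) :
    IntervalIntegrable ((Iic b).piecewise f₁ f₂) volume a c :=
  (h₁.congr_uIoo (eqOn_piecewise_Iic_left hab le_rfl).symm).trans
    (h₂.congr_uIoo (eqOn_piecewise_Iic_right hbc).symm)

theorem intervalIntegral.integral_piecewise_Iic [NormedAddCommGroup F] [NormedSpace ℝ F]
    (h₁ : IntervalIntegrable f₁ volume a b) (h₂ : IntervalIntegrable f₂ volume b c)
    (hab : a ≤ b) (hbc : b ≤ c) :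
    ∫ s in a..c, (Iic b).piecewise f₁ f₂ s = (∫ s in a..b, f₁ s) + ∫ s in b..c, f₂ s := by
  rw [← integral_add_adjacent_intervals
      (h₁.congr_uIoo (eqOn_piecewise_Iic_left hab le_rfl).symm)
      (h₂.congr_uIoo (eqOn_piecewise_Iic_right hbc).symm),
    integral_congr_uIoo (eqOn_piecewise_Iic_left hab le_rfl),
    integral_congr_uIoo (eqOn_piecewise_Iic_right hbc)]

end Piecewise

namespace IsAC

variable {n : ℕ} {a b c d : ℝ} {γ γ' : ℝ → E n}

theorem intervalIntegrable (h : IsAC a b γ γ') (hac : a ≤ c) (hcd : c ≤ d) (hdb : d ≤ b) :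
    IntervalIntegrable γ' volume c d :=
  (intervalIntegrable_iff_integrableOn_Icc_of_le hcd).2 (h.1.mono_set (Icc_subset_Icc hac hdb))

theorem mono (h : IsAC a b γ γ') (hac : a ≤ c) (hdb : d ≤ b) : IsAC c d γ γ' :=
  ⟨h.1.mono_set (Icc_subset_Icc hac hdb), fun _ _ hc hcd hd => h.2 _ _ (hac.trans hc) hcd
    (hd.trans hdb)⟩

theorem of_sub_eq_integral (hab : a ≤ b) (hγ' : IntervalIntegrable γ' volume a b)
    (h : ∀ s ∈ Icc a b, γ s - γ a = ∫ u in a..s, γ' u) : IsAC a b γ γ' := by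
  refine ⟨(intervalIntegrable_iff_integrableOn_Icc_of_le hab).1 hγ', fun c d hac hcd hdb => ?_⟩
  have hsub {s : ℝ} (has : a ≤ s) (hsb : s ≤ b) : IntervalIntegrable γ' volume a s :=
    hγ'.mono_set (uIcc_subset_uIcc_left (by rw [uIcc_of_le hab]; exact ⟨has, hsb⟩))
  rw [← integral_interval_sub_left (hsub (hac.trans hcd) hdb) (hsub hac (hcd.trans hdb)),
    ← h d ⟨hac.trans hcd, hdb⟩, ← h c ⟨hac, hcd.trans hdb⟩]
  abel

theorem continuousOn (h : IsAC a b γ γ') (hab : a ≤ b) : ContinuousOn γ (Icc a b) := by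
  have hprim : ContinuousOn (fun s => γ a + ∫ u in a..s, γ' u) (Icc a b) := by
    have := continuousOn_primitive_interval (μ := volume) (a := a) (b := b) (f := γ')
      (by rw [uIcc_of_le hab]; exact h.1)
    rw [uIcc_of_le hab] at this
    exact continuousOn_const.add this
  exact hprim.congr fun s hs => eq_add_of_sub_eq' (h.2 a s le_rfl hs.1 hs.2)

theorem norm_sub_le (h : IsAC a b γ γ') (hac : a ≤ c) (hcd : c ≤ d) (hdb : d ≤ b) :
    ‖γ d - γ c‖ ≤ ∫ s in c..d, ‖γ' s‖ := by
  rw [h.2 c d hac hcd hdb]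
  exact norm_integral_le_integral_norm hcd

theorem comp_mul_add {a' b' α β : ℝ} (h : IsAC a' b' γ γ') (hα : 0 < α) (hab : a ≤ b)
    (ha : α * a + β = a') (hb : α * b + β = b') :
    IsAC a b (fun s => γ (α * s + β)) (fun s => α • γ' (α * s + β)) := by
  subst ha hb
  have hmono {s u : ℝ} (hsu : s ≤ u) : α * s + β ≤ α * u + β := by gcongr
  refine of_sub_eq_integral hab (((h.intervalIntegrable le_rfl (hmono hab) le_rfl).comp_mul_add
    hα.ne' rfl rfl).smul α) fun s hs => ?_
  rw [intervalIntegral.integral_smul, smul_integral_comp_mul_add,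
    h.2 _ _ le_rfl (hmono hs.1) (hmono hs.2)]

theorem comp_add_right {a' b' β : ℝ} (h : IsAC a' b' γ γ') (hab : a ≤ b) (ha : a + β = a')
    (hb : b + β = b') : IsAC a b (fun s => γ (s + β)) (fun s => γ' (s + β)) := by
  simpa using h.comp_mul_add one_pos hab (β := β) (by simpa using ha) (by simpa using hb)

theorem piecewise {γ₁ γ₁' γ₂ γ₂' : ℝ → E n} (h₁ : IsAC a b γ₁ γ₁') (h₂ : IsAC b c γ₂ γ₂')
    (hab : a ≤ b) (hbc : b ≤ c) (hb : γ₁ b = γ₂ b) :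
    IsAC a c ((Iic b).piecewise γ₁ γ₂) ((Iic b).piecewise γ₁' γ₂') := by
  have hγ₁' := h₁.intervalIntegrable le_rfl hab le_rfl
  have hγ₁a : (Iic b).piecewise γ₁ γ₂ a = γ₁ a := piecewise_eq_of_mem (Iic b) _ _ hab
  refine of_sub_eq_integral (hab.trans hbc) (hγ₁'.piecewise_Iic
    (h₂.intervalIntegrable le_rfl hbc le_rfl) hab hbc) fun s hs => ?_
  rcases le_total s b with hsb | hbs
  · rw [hγ₁a, piecewise_eq_of_mem (Iic b) _ _ hsb, h₁.2 a s le_rfl hs.1 hsb]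
    exact (integral_congr_uIoo (eqOn_piecewise_Iic_left hs.1 hsb)).symm
  · rw [hγ₁a, piecewise_Iic_apply_of_le hb hbs,
      integral_piecewise_Iic hγ₁' (h₂.intervalIntegrable le_rfl hbs hs.2) hab hbs,
      ← h₁.2 a b le_rfl hab le_rfl, ← h₂.2 b s le_rfl hbs hs.2, hb]
    abel

end IsAC

theorem ae_le_of_eventually_integral_le {f : ℝ → ℝ} {a b C : ℝ}
    (hf : IntervalIntegrable f volume a b)
    (h : ∀ s ∈ Ioo a b, ∀ᶠ d in 𝓝[>] s, ∫ u in s..d, f u ≤ C * (d - s)) :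
    ∀ᵐ s ∂volume.restrict (Icc a b), f s ≤ C := by
  rw [Measure.restrict_congr_set Ioo_ae_eq_Icc.symm, ae_restrict_iff' measurableSet_Ioo]
  filter_upwards [hf.ae_hasDerivAt_integral] with s hderiv hs
  have hab : a ≤ b := (hs.1.trans hs.2).le
  have hsub : Ioo a b ⊆ uIcc a b := uIcc_of_le hab ▸ Ioo_subset_Icc_self
  have hslope := (hasDerivWithinAt_iff_tendsto_slope' (s := Ioi s) (lt_irrefl s)).1
    ((hderiv (hsub hs) a left_mem_uIcc).hasDerivWithinAt (s := Ioi s))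
  refine le_of_tendsto hslope ?_
  filter_upwards [h s hs, Ioo_mem_nhdsGT hs.2] with d hd hdb
  rw [slope_def_field, integral_interval_sub_left (hf.mono_set (uIcc_subset_uIcc_left
    (hsub ⟨hs.1.trans hdb.1, hdb.2⟩))) (hf.mono_set (uIcc_subset_uIcc_left (hsub hs))),
    div_le_iff₀ (sub_pos.2 hdb.1)]
  exact hd

section SlowDown

variable {n : ℕ} {c d t : ℝ} {γ γ' : ℝ → E n}

/-- The comparison curve: `γ`, except that `γ|[c, d]` is run through at half speed, so that from
time `2d - c` on the curve follows `γ` with a delay of `d - c`. -/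
def slowDown (c d : ℝ) (γ : ℝ → E n) : ℝ → E n :=
  (Iic (2 * d - c)).piecewise ((Iic c).piecewise γ fun s => γ (2⁻¹ * s + c / 2))
    fun s => γ (s + (c - d))

def slowDownDeriv (c d : ℝ) (γ' : ℝ → E n) : ℝ → E n :=
  (Iic (2 * d - c)).piecewise ((Iic c).piecewise γ' fun s => (2⁻¹ : ℝ) • γ' (2⁻¹ * s + c / 2))
    fun s => γ' (s + (c - d))

theorem slowDown_zero (hc : 0 ≤ c) (hcd : c ≤ d) : slowDown c d γ 0 = γ 0 := by
  rw [slowDown, piecewise_eq_of_mem (Iic _) _ _ (show (0 : ℝ) ≤ 2 * d - c by linarith),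
    piecewise_eq_of_mem (Iic c) _ _ hc]

theorem slowDown_apply_of_le (hcd : c ≤ d) {s : ℝ} (hs : 2 * d - c ≤ s) :
    slowDown c d γ s = γ (s + (c - d)) := by
  refine piecewise_Iic_apply_of_le ?_ hs
  rw [piecewise_Iic_apply_of_le (by ring_nf) (show c ≤ 2 * d - c by linarith)]
  ring_nf

theorem IsAC.slowDown (h : IsAC 0 t γ γ') (hc : 0 ≤ c) (hcd : c ≤ d) (hdt : 2 * d - c ≤ t) :
    IsAC 0 t (slowDown c d γ) (slowDownDeriv c d γ') := by
  have hd : c ≤ 2 * d - c := by linarith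
  refine .piecewise (.piecewise (h.mono le_rfl (by linarith)) ?_ hc hd (by ring_nf))
    ((h.mono (c := d) (d := t + (c - d)) (by linarith) (by linarith)).comp_add_right hdt
      (by ring) (by ring)) (hc.trans hd) hdt ?_
  · exact (h.mono (d := d) hc (by linarith)).comp_mul_add (by norm_num) hd (by ring) (by ring)
  · rw [piecewise_Iic_apply_of_le (by ring_nf) hd]
    ring_nf

variable (ℓ : E n → E n → ℝ)

theorem lagrangian_slowDown :
    (fun s => ℓ (slowDown c d γ s) (slowDownDeriv c d γ' s)) =
      (Iic (2 * d - c)).piecewise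
        ((Iic c).piecewise (fun s => ℓ (γ s) (γ' s))
          fun s => ℓ (γ (2⁻¹ * s + c / 2)) ((2⁻¹ : ℝ) • γ' (2⁻¹ * s + c / 2)))
        fun s => ℓ (γ (s + (c - d))) (γ' (s + (c - d))) := by
  ext s
  simp only [slowDown, slowDownDeriv, Set.piecewise]
  split_ifs <;> rfl

variable {ℓ}
variable (hγℓ : IntervalIntegrable (fun s => ℓ (γ s) (γ' s)) volume 0 t)
  (hhalf : IntervalIntegrable (fun s => ℓ (γ s) ((2⁻¹ : ℝ) • γ' s)) volume c d)
  (hc : 0 ≤ c) (hcd : c ≤ d) (hdt : 2 * d - c ≤ t)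
include hγℓ hhalf hc hcd hdt

theorem intervalIntegrable_lagrangian_slowDown :
    IntervalIntegrable (fun s => ℓ (slowDown c d γ s) (slowDownDeriv c d γ' s)) volume 0 t := by
  have hd : c ≤ 2 * d - c := by linarith
  rw [lagrangian_slowDown]
  refine .piecewise_Iic (.piecewise_Iic (hγℓ.mono_of_le le_rfl hc (by linarith))
      (hhalf.comp_mul_add (by norm_num) (by ring) (by ring)) hc hd) ?_ (hc.trans hd) hdt
  simpa using (hγℓ.mono_of_le (c := d) (d := t + (c - d)) (by linarith) (by linarith)
    (by linarith)).comp_mul_add one_ne_zero (β := c - d) (a := 2 * d - c) (b := t)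
    (by ring) (by ring)

theorem integral_lagrangian_slowDown :
    ∫ s in 0..t, ℓ (slowDown c d γ s) (slowDownDeriv c d γ' s) =
      (∫ s in 0..c, ℓ (γ s) (γ' s)) + 2 * (∫ s in c..d, ℓ (γ s) ((2⁻¹ : ℝ) • γ' s)) +
        ∫ s in d..t + (c - d), ℓ (γ s) (γ' s) := by
  have hd : c ≤ 2 * d - c := by linarith
  have h₁ := hγℓ.mono_of_le le_rfl hc (by linarith)
  have h₂ := hhalf.comp_mul_add (a := c) (b := 2 * d - c) (β := c / 2)
    (by norm_num : (2⁻¹ : ℝ) ≠ 0) (by ring) (by ring)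
  have h₃ : IntervalIntegrable (fun s => ℓ (γ (s + (c - d))) (γ' (s + (c - d)))) volume
      (2 * d - c) t := by
    simpa using (hγℓ.mono_of_le (c := d) (d := t + (c - d)) (by linarith) (by linarith)
      (by linarith)).comp_mul_add one_ne_zero (β := c - d) (a := 2 * d - c) (b := t)
      (by ring) (by ring)
  rw [lagrangian_slowDown, integral_piecewise_Iic (h₁.piecewise_Iic h₂ hc hd) h₃ (hc.trans hd) hdt,
    integral_piecewise_Iic h₁ h₂ hc hd,
    integral_comp_mul_add (f := fun u => ℓ (γ u) ((2⁻¹ : ℝ) • γ' u)) (by norm_num),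
    integral_comp_add_right (f := fun u => ℓ (γ u) (γ' u)), show 2⁻¹ * c + c / 2 = c by ring,
    show 2⁻¹ * (2 * d - c) + c / 2 = d by ring, show 2 * d - c + (c - d) = d by ring]
  simp

end SlowDown

section Lagrangian

variable {n : ℕ} {ℓ : E n → E n → ℝ} {K0 : ℝ} {a b : ℝ} {γ γ' : ℝ → E n}

theorem IntervalIntegrable.sq_norm_of_lagrangian (hlow : ∀ x v, ‖v‖ ^ 2 / 2 - K0 ≤ ℓ x v)
    (hγ' : IntervalIntegrable γ' volume a b)
    (hγℓ : IntervalIntegrable (fun s => ℓ (γ s) (γ' s)) volume a b) :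
    IntervalIntegrable (fun s => ‖γ' s‖ ^ 2) volume a b :=
  ((hγℓ.const_mul 2).add (intervalIntegrable_const (c := 2 * K0))).mono_fun'
    (hγ'.aestronglyMeasurable_restrict_uIoc.norm.pow 2) (ae_of_all _ fun s => by
      have := hlow (γ s) (γ' s)
      simp only [Real.norm_of_nonneg (sq_nonneg ‖γ' s‖)]
      linarith)

theorem IntervalIntegrable.lagrangian_half (hℓc : Continuous fun p : E n × E n => ℓ p.1 p.2)
    (hℓ : ∀ x v, ‖v‖ ^ 2 / 2 - K0 ≤ ℓ x v ∧ ℓ x v ≤ ‖v‖ ^ 2 / 2 + K0)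
    (hγ : ContinuousOn γ (uIcc a b)) (hγ' : IntervalIntegrable γ' volume a b)
    (hsq : IntervalIntegrable (fun s => ‖γ' s‖ ^ 2) volume a b) :
    IntervalIntegrable (fun s => ℓ (γ s) ((2⁻¹ : ℝ) • γ' s)) volume a b := by
  refine ((hsq.div_const 8).add (intervalIntegrable_const (c := K0))).mono_fun'
    (hℓc.comp_aestronglyMeasurable (((hγ.mono uIoc_subset_uIcc).aestronglyMeasurable
      measurableSet_uIoc).prodMk (hγ'.aestronglyMeasurable_restrict_uIoc.const_smul (2⁻¹ : ℝ))))
    (ae_of_all _ fun s => ?_)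
  have hnorm : ‖(2⁻¹ : ℝ) • γ' s‖ ^ 2 / 2 = ‖γ' s‖ ^ 2 / 8 := by
    rw [norm_smul, Real.norm_of_nonneg (by norm_num)]; ring
  obtain ⟨hlo, hhi⟩ := hℓ (γ s) ((2⁻¹ : ℝ) • γ' s)
  rw [hnorm] at hlo hhi
  simp only [Real.norm_eq_abs, abs_le]
  constructor <;> linarith [sq_nonneg ‖γ' s‖]

variable (hab : a ≤ b)
include hab

theorem half_integral_sq_norm_sub_le_integral (hlow : ∀ x v, ‖v‖ ^ 2 / 2 - K0 ≤ ℓ x v)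
    (hsq : IntervalIntegrable (fun s => ‖γ' s‖ ^ 2) volume a b)
    (hγℓ : IntervalIntegrable (fun s => ℓ (γ s) (γ' s)) volume a b) :
    (∫ s in a..b, ‖γ' s‖ ^ 2) / 2 - K0 * (b - a) ≤ ∫ s in a..b, ℓ (γ s) (γ' s) := by
  have := integral_mono_on hab ((hsq.div_const 2).sub (intervalIntegrable_const (c := K0))) hγℓ
    fun s _ => hlow (γ s) (γ' s)
  rw [intervalIntegral.integral_sub (hsq.div_const 2) intervalIntegrable_const,
    intervalIntegral.integral_div, intervalIntegral.integral_const, smul_eq_mul] at this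
  linarith

theorem mul_integral_norm_sub_le_integral (hlow : ∀ x v, ‖v‖ ^ 2 / 2 - K0 ≤ ℓ x v) (G : ℝ)
    (hγ' : IntervalIntegrable γ' volume a b)
    (hγℓ : IntervalIntegrable (fun s => ℓ (γ s) (γ' s)) volume a b) :
    G * (∫ s in a..b, ‖γ' s‖) - (G ^ 2 / 2 + K0) * (b - a) ≤ ∫ s in a..b, ℓ (γ s) (γ' s) := by
  have := integral_mono_on hab
    ((hγ'.norm.const_mul G).sub (intervalIntegrable_const (c := G ^ 2 / 2 + K0))) hγℓ
    fun s _ => by nlinarith [hlow (γ s) (γ' s), sq_nonneg (‖γ' s‖ - G)]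
  rw [intervalIntegral.integral_sub (hγ'.norm.const_mul G) intervalIntegrable_const,
    intervalIntegral.integral_const_mul, intervalIntegral.integral_const, smul_eq_mul] at this
  linarith

theorem integral_lagrangian_half_le (hup : ∀ x v, ℓ x v ≤ ‖v‖ ^ 2 / 2 + K0)
    (hsq : IntervalIntegrable (fun s => ‖γ' s‖ ^ 2) volume a b)
    (hhalf : IntervalIntegrable (fun s => ℓ (γ s) ((2⁻¹ : ℝ) • γ' s)) volume a b) :
    ∫ s in a..b, ℓ (γ s) ((2⁻¹ : ℝ) • γ' s) ≤ (∫ s in a..b, ‖γ' s‖ ^ 2) / 8 + K0 * (b - a) := by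
  have := integral_mono_on hab hhalf ((hsq.div_const 8).add (intervalIntegrable_const (c := K0)))
    fun s _ => by
      have h := hup (γ s) ((2⁻¹ : ℝ) • γ' s)
      rwa [norm_smul, Real.norm_of_nonneg (by norm_num), mul_pow, div_eq_mul_inv,
        show ((2 : ℝ)⁻¹) ^ 2 * ‖γ' s‖ ^ 2 * 2⁻¹ = ‖γ' s‖ ^ 2 / 8 by ring] at h
  rw [intervalIntegral.integral_add (hsq.div_const 8) intervalIntegrable_const,
    intervalIntegral.integral_div, intervalIntegral.integral_const, smul_eq_mul] at this
  linarith

end Lagrangian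

section Minimizer

variable {n : ℕ} {ℓ : E n → E n → ℝ} {g : E n → ℝ} {t : ℝ} {γ γ' : ℝ → E n}

def IsMinimizer (ℓ : E n → E n → ℝ) (g : E n → ℝ) (t : ℝ) (γ γ' : ℝ → E n) : Prop :=
  ∀ η η' : ℝ → E n, IsAC 0 t η η' → η 0 = γ 0 →
    IntervalIntegrable (fun s => ℓ (η s) (η' s)) volume 0 t →
    (∫ s in 0..t, ℓ (γ s) (γ' s)) + g (γ t) ≤ (∫ s in 0..t, ℓ (η s) (η' s)) + g (η t)

variable (hmin : IsMinimizer ℓ g t γ γ') (hAC : IsAC 0 t γ γ')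
  (hγℓ : IntervalIntegrable (fun s => ℓ (γ s) (γ' s)) volume 0 t)
include hmin hAC hγℓ

theorem IsMinimizer.le_slowDown {c d : ℝ}
    (hhalf : IntervalIntegrable (fun s => ℓ (γ s) ((2⁻¹ : ℝ) • γ' s)) volume c d)
    (hc : 0 ≤ c) (hcd : c ≤ d) (hdt : 2 * d - c ≤ t) :
    (∫ s in c..d, ℓ (γ s) (γ' s)) + (∫ s in t + (c - d)..t, ℓ (γ s) (γ' s)) + g (γ t) ≤
      2 * (∫ s in c..d, ℓ (γ s) ((2⁻¹ : ℝ) • γ' s)) + g (γ (t + (c - d))) := by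
  have hη := hmin _ _ (hAC.slowDown hc hcd hdt) (slowDown_zero hc hcd)
    (intervalIntegrable_lagrangian_slowDown hγℓ hhalf hc hcd hdt)
  rw [integral_lagrangian_slowDown hγℓ hhalf hc hcd hdt, slowDown_apply_of_le hcd hdt] at hη
  have hsplit : ∫ s in 0..t, ℓ (γ s) (γ' s) =
      (∫ s in 0..c, ℓ (γ s) (γ' s)) + (∫ s in c..d, ℓ (γ s) (γ' s)) +
        (∫ s in d..t + (c - d), ℓ (γ s) (γ' s)) + ∫ s in t + (c - d)..t, ℓ (γ s) (γ' s) := by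
    rw [integral_add_adjacent_intervals (hγℓ.mono_of_le le_rfl hc (by linarith))
        (hγℓ.mono_of_le hc hcd (by linarith)),
      integral_add_adjacent_intervals (hγℓ.mono_of_le le_rfl (by linarith) (by linarith))
        (hγℓ.mono_of_le (by linarith) (by linarith) (by linarith)),
      integral_add_adjacent_intervals (hγℓ.mono_of_le le_rfl (by linarith) (by linarith))
        (hγℓ.mono_of_le (by linarith) (by linarith) le_rfl)]
  linarith

variable {K0 G : ℝ} (hℓc : Continuous fun p : E n × E n => ℓ p.1 p.2)
  (hℓ : ∀ x v, ‖v‖ ^ 2 / 2 - K0 ≤ ℓ x v ∧ ℓ x v ≤ ‖v‖ ^ 2 / 2 + K0)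
  (hG : 0 ≤ G) (hg : ∀ x₁ x₂, |g x₁ - g x₂| ≤ G * ‖x₁ - x₂‖)
include hℓc hℓ hG hg

theorem IsMinimizer.integral_sq_norm_le {c d : ℝ} (hc : 0 ≤ c) (hcd : c ≤ d)
    (hdt : 2 * d - c ≤ t) :
    ∫ s in c..d, ‖γ' s‖ ^ 2 ≤ (16 * K0 + 2 * G ^ 2) * (d - c) := by
  have hγ' := hAC.intervalIntegrable le_rfl (by linarith : (0 : ℝ) ≤ t) le_rfl
  have hsq := hγ'.sq_norm_of_lagrangian (fun x v => (hℓ x v).1) hγℓ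
  have hhalf : IntervalIntegrable (fun s => ℓ (γ s) ((2⁻¹ : ℝ) • γ' s)) volume c d :=
    (hγ'.mono_of_le hc hcd (by linarith)).lagrangian_half hℓc hℓ
      ((hAC.continuousOn (by linarith)).mono (by
        rw [uIcc_of_le hcd]; exact Icc_subset_Icc hc (by linarith)))
      (hsq.mono_of_le hc hcd (by linarith))
  have hq : 0 ≤ t + (c - d) := by linarith
  have hE1 := half_integral_sq_norm_sub_le_integral hcd (fun x v => (hℓ x v).1)
    (hsq.mono_of_le hc hcd (by linarith)) (hγℓ.mono_of_le hc hcd (by linarith))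
  have hE2 := mul_integral_norm_sub_le_integral (by linarith) (fun x v => (hℓ x v).1) G
    (hγ'.mono_of_le hq (by linarith) le_rfl) (hγℓ.mono_of_le hq (by linarith) le_rfl)
  have hE3 := integral_lagrangian_half_le hcd (fun x v => (hℓ x v).2)
    (hsq.mono_of_le hc hcd (by linarith)) hhalf
  have hE4 : g (γ (t + (c - d))) - g (γ t) ≤ G * ∫ s in t + (c - d)..t, ‖γ' s‖ :=
    (le_abs_self _).trans <| (hg _ _).trans <| mul_le_mul_of_nonneg_left
      (by rw [norm_sub_rev]; exact hAC.norm_sub_le hq (by linarith) le_rfl) hG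
  have := hmin.le_slowDown hAC hγℓ hhalf hc hcd hdt
  linarith

theorem IsMinimizer.ae_sq_norm_le (ht : 0 ≤ t) :
    ∀ᵐ s ∂volume.restrict (Icc 0 t), ‖γ' s‖ ^ 2 ≤ 16 * K0 + 2 * G ^ 2 := by
  have hsq := (hAC.intervalIntegrable le_rfl ht le_rfl).sq_norm_of_lagrangian
    (fun x v => (hℓ x v).1) hγℓ
  refine ae_le_of_eventually_integral_le hsq fun s hs => ?_
  filter_upwards [Ioc_mem_nhdsGT (show s < (s + t) / 2 by linarith [hs.2])] with d hd
  exact hmin.integral_sq_norm_le hAC hγℓ hℓc hℓ hG hg hs.1.le hd.1.le (by linarith [hd.2])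

end Minimizer

theorem stmt_3_general (n : ℕ) (K0 G : ℝ) (hK0 : 0 < K0) (hG : 0 ≤ G) :
    ∃ M0 : ℝ, 0 < M0 ∧
      ∀ L : E n → E n → E n → ℝ,
        Continuous (fun q : E n × E n × E n => L q.1 q.2.1 q.2.2) →
        (∀ (x y v : E n) (k : Fin n → ℤ), L x (y + intVec n k) v = L x y v) →
        (∀ x y, ConvexOn ℝ univ (fun v => L x y v)) →
        (∀ x y v, ‖v‖ ^ 2 / 2 - K0 ≤ L x y v ∧ L x y v ≤ ‖v‖ ^ 2 / 2 + K0) →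
        ∀ g : E n → ℝ, (∀ x₁ x₂, |g x₁ - g x₂| ≤ G * ‖x₁ - x₂‖) →
        ∀ (x : E n) (t ε : ℝ), 0 < t → 0 < ε →
        ∀ γ γ' : ℝ → E n, IsAC 0 t γ γ' → γ 0 = x →
          IntervalIntegrable (fun s => L (γ s) (ε⁻¹ • γ s) (-γ' s)) volume 0 t →
          (∀ η η' : ℝ → E n, IsAC 0 t η η' → η 0 = x →
            IntervalIntegrable (fun s => L (η s) (ε⁻¹ • η s) (-η' s)) volume 0 t →
            (∫ s in (0:ℝ)..t, L (γ s) (ε⁻¹ • γ s) (-γ' s)) + g (γ t) ≤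
              (∫ s in (0:ℝ)..t, L (η s) (ε⁻¹ • η s) (-η' s)) + g (η t)) →
          ∀ᵐ s ∂(volume.restrict (Icc 0 t)), ‖γ' s‖ ≤ M0 := by
  refine ⟨√(16 * K0 + 2 * G ^ 2), by positivity, ?_⟩
  intro L hLc _ _ hLb g hg x t ε ht _ γ γ' hAC hγ0 hγℓ hmin
  let ℓ : E n → E n → ℝ := fun y v => L y (ε⁻¹ • y) (-v)
  have hℓc : Continuous fun p : E n × E n => ℓ p.1 p.2 :=
    hLc.comp (by fun_prop : Continuous fun p : E n × E n => (p.1, ε⁻¹ • p.1, -p.2))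
  have hℓ (y v : E n) : ‖v‖ ^ 2 / 2 - K0 ≤ ℓ y v ∧ ℓ y v ≤ ‖v‖ ^ 2 / 2 + K0 := by
    simpa only [norm_neg] using hLb y (ε⁻¹ • y) (-v)
  have hγmin : IsMinimizer ℓ g t γ γ' := fun η η' hη hη0 => hmin η η' hη (hη0.trans hγ0)
  filter_upwards [hγmin.ae_sq_norm_le hAC hγℓ hℓc hℓ hG hg ht.le] with s hs
  exact Real.le_sqrt_of_sq_le hs

/-- Lemma 2.1: minimizing curves of the Cauchy optimal control functional have
velocity bounded a.e. by a constant `M0 = M0(n, K0, G)`, uniformly in `ε`. -/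
theorem stmt_3 (n : ℕ) (hn : 1 ≤ n) (K0 G : ℝ) (hK0 : 0 < K0) (hG : 0 ≤ G) :
    ∃ M0 : ℝ, 0 < M0 ∧
      ∀ L : E n → E n → E n → ℝ,
        Continuous (fun q : E n × E n × E n => L q.1 q.2.1 q.2.2) →
        (∀ (x y v : E n) (k : Fin n → ℤ), L x (y + intVec n k) v = L x y v) →
        (∀ x y, ConvexOn ℝ univ (fun v => L x y v)) →
        (∀ x y v, ‖v‖ ^ 2 / 2 - K0 ≤ L x y v ∧ L x y v ≤ ‖v‖ ^ 2 / 2 + K0) →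
        ∀ g : E n → ℝ, (∀ x₁ x₂, |g x₁ - g x₂| ≤ G * ‖x₁ - x₂‖) →
        ∀ (x : E n) (t ε : ℝ), 0 < t → 0 < ε →
        ∀ γ γ' : ℝ → E n, IsAC 0 t γ γ' → γ 0 = x →
          IntervalIntegrable (fun s => L (γ s) (ε⁻¹ • γ s) (-γ' s)) volume 0 t →
          (∀ η η' : ℝ → E n, IsAC 0 t η η' → η 0 = x →
            IntervalIntegrable (fun s => L (η s) (ε⁻¹ • η s) (-η' s)) volume 0 t →
            (∫ s in (0:ℝ)..t, L (γ s) (ε⁻¹ • γ s) (-γ' s)) + g (γ t) ≤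
              (∫ s in (0:ℝ)..t, L (η s) (ε⁻¹ • η s) (-η' s)) + g (η t)) →
          ∀ᵐ s ∂(volume.restrict (Icc 0 t)), ‖γ' s‖ ≤ M0 :=
  stmt_3_general n K0 G hK0 hG
end
end

section
/- Let n ≥ 1 and K0 > 0. Let L : ℝⁿ × ℝⁿ × ℝⁿ → ℝ be continuous, ℤⁿ-periodic in its second argument, convex in its third argument, and satisfy |v|²/2 − K0 ≤ L(x,y,v) ≤ |v|²/2 + K0 for all x, y, v ∈ ℝⁿ. Then there exists a constant M0 > 0 depending only on n and K0 with the following property: for every x ∈ ℝⁿ, λ > 0, ε > 0, if γ : [0,∞) → ℝⁿ is locally absolutely continuous with γ(0) = x and ∫₀^∞ e^{−λs} L(γ(s), γ(s)/ε, −γ̇(s)) ds ≤ ∫₀^∞ e^{−λs} L(η(s), η(s)/ε, −η̇(s)) ds for every locally absolutely continuous η : [0,∞) → ℝⁿ with η(0) = x (i.e. γ is a minimizing curve for the discounted control functional), then |γ̇(s)| ≤ M0 for almost every s ∈ [0,∞). -/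
open MeasureTheory Real Set

noncomputable section

/-!
At almost every time `t` the curve is differentiable with derivative `γ' t`, and the tail
`γ (· + t)` of a minimizer is again a minimizer (dynamic programming), so it suffices to bound a
derivative `v` of a minimizer at time `0`. If `‖v‖` is large, then for small `h` the curve covers a
distance `δ ≈ h ‖v‖` during `[0, h]`, at a kinetic cost of at least `δ² / (2h)`. The competitor
that runs along the segment from `γ 0` to `γ h` at unit speed and then follows `γ (· + h)` with a
delay `δ - h` pays at most `(1/2 + K) δ` on the segment and `K (δ - h)` for the delay. Comparing
the two costs bounds `δ / h`, hence `‖v‖`, by a constant depending only on `K`.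
-/

open Filter Topology Interval

theorem integrableOn_Ioi_comp_sub_iff {F : Type*} [NormedAddCommGroup F] {f : ℝ → F} (a : ℝ) :
    IntegrableOn (fun s => f (s - a)) (Ioi a) ↔ IntegrableOn f (Ioi 0) := by
  rw [← sub_self a, ← image_sub_const_Ioi,
    (measurePreserving_sub_right volume a).integrableOn_image (measurableEmbedding_subRight a)]
  rfl

theorem integral_Ioi_comp_sub {F : Type*} [NormedAddCommGroup F] [NormedSpace ℝ F]
    (f : ℝ → F) (a : ℝ) : ∫ s in Ioi a, f (s - a) = ∫ s in Ioi 0, f s := by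
  rw [← sub_self a, ← image_sub_const_Ioi,
    (measurePreserving_sub_right volume a).setIntegral_image_emb (measurableEmbedding_subRight a)]

namespace DiscountedControl

def concat {α : Type*} (t : ℝ) (γ ζ : ℝ → α) (s : ℝ) : α :=
  if s ≤ t then γ s else ζ (s - t)

section concat

variable {α : Type*} {t s : ℝ} {γ ζ : ℝ → α}

theorem concat_of_le (hs : s ≤ t) : concat t γ ζ s = γ s := if_pos hs

theorem concat_of_lt (hs : t < s) : concat t γ ζ s = ζ (s - t) := if_neg hs.not_ge

theorem concat_of_ge (hmatch : ζ 0 = γ t) (hs : t ≤ s) : concat t γ ζ s = ζ (s - t) := by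
  rcases hs.lt_or_eq with hs | rfl
  · exact concat_of_lt hs
  · rw [concat_of_le le_rfl, sub_self, hmatch]

theorem concat_comp_add_right_self : concat t γ (fun s => γ (s + t)) = γ := by
  ext s
  unfold concat
  split_ifs <;> simp

end concat

section IsLocallyAC

variable {X : Type*} [NormedAddCommGroup X] [NormedSpace ℝ X]

def IsLocallyAC (γ γ' : ℝ → X) : Prop :=
  ∀ c d : ℝ, 0 ≤ c → c ≤ d →
    IntervalIntegrable γ' volume c d ∧ γ d - γ c = ∫ s in c..d, γ' s

variable {γ γ' ζ ζ' : ℝ → X}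

theorem IsLocallyAC.comp_add_right (hγ : IsLocallyAC γ γ') {a : ℝ} (ha : 0 ≤ a) :
    IsLocallyAC (fun s => γ (s + a)) (fun s => γ' (s + a)) := by
  intro c d hc hcd
  obtain ⟨hint, hsub⟩ := hγ (c + a) (d + a) (by linarith) (by linarith)
  refine ⟨by simpa using hint.comp_add_right a, ?_⟩
  rw [intervalIntegral.integral_comp_add_right (fun s => γ' s), hsub]

theorem isLocallyAC_segment [CompleteSpace X] (p v : X) :
    IsLocallyAC (fun s => p + s • v) (fun _ => v) := by
  intro c d _ _
  refine ⟨intervalIntegrable_const, ?_⟩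
  rw [intervalIntegral.integral_const, add_sub_add_left_eq_sub, sub_smul]

theorem isLocallyAC_concat (hγ : IsLocallyAC γ γ') (hζ : IsLocallyAC ζ ζ') {t : ℝ}
    (hmatch : ζ 0 = γ t) : IsLocallyAC (concat t γ ζ) (concat t γ' ζ') := by
  have hleft : ∀ c d, 0 ≤ c → c ≤ d → d ≤ t →
      IntervalIntegrable (concat t γ' ζ') volume c d ∧
        concat t γ ζ d - concat t γ ζ c = ∫ s in c..d, concat t γ' ζ' s := by
    intro c d hc hcd hdt
    have heq : EqOn (concat t γ' ζ') γ' (Ι c d) := fun s hs =>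
      concat_of_le (((uIoc_of_le hcd ▸ hs).2).trans hdt)
    obtain ⟨hint, hsub⟩ := hγ c d hc hcd
    refine ⟨(intervalIntegrable_congr heq).2 hint, ?_⟩
    rw [concat_of_le hdt, concat_of_le (hcd.trans hdt), hsub,
      intervalIntegral.integral_congr_ae (Eventually.of_forall fun s hs => heq hs)]
  have hright : ∀ c d, t ≤ c → c ≤ d →
      IntervalIntegrable (concat t γ' ζ') volume c d ∧
        concat t γ ζ d - concat t γ ζ c = ∫ s in c..d, concat t γ' ζ' s := by
    intro c d htc hcd
    have heq : EqOn (concat t γ' ζ') (fun s => ζ' (s - t)) (Ι c d) := fun s hs =>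
      concat_of_lt (htc.trans_lt (uIoc_of_le hcd ▸ hs).1)
    obtain ⟨hint, hsub⟩ := hζ (c - t) (d - t) (by linarith) (by linarith)
    refine ⟨(intervalIntegrable_congr heq).2 (by simpa using hint.comp_sub_right t), ?_⟩
    rw [concat_of_ge hmatch (htc.trans hcd), concat_of_ge hmatch htc, hsub,
      intervalIntegral.integral_congr_ae (Eventually.of_forall fun s hs => heq hs),
      intervalIntegral.integral_comp_sub_right]
  intro c d hc hcd
  rcases le_total d t with hdt | htd
  · exact hleft c d hc hcd hdt
  rcases le_total t c with htc | hct
  · exact hright c d htc hcd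
  obtain ⟨hint₁, hsub₁⟩ := hleft c t hc hct le_rfl
  obtain ⟨hint₂, hsub₂⟩ := hright t d le_rfl htd
  refine ⟨hint₁.trans hint₂, ?_⟩
  rw [← intervalIntegral.integral_add_adjacent_intervals hint₁ hint₂, ← hsub₁, ← hsub₂]
  abel

theorem IsLocallyAC.ae_hasDerivAt [CompleteSpace X] (hγ : IsLocallyAC γ γ') :
    ∀ᵐ t, 0 < t → HasDerivAt γ (γ' t) t := by
  have h (m : ℕ) : ∀ᵐ t, t ∈ Ioo 0 (m : ℝ) → HasDerivAt γ (γ' t) t := by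
    filter_upwards [(hγ 0 m le_rfl m.cast_nonneg).1.ae_hasDerivAt_integral] with t ht htm
    rw [uIcc_of_le m.cast_nonneg] at ht
    have hd := (ht (Ioo_subset_Icc_self htm) 0 (left_mem_Icc.2 m.cast_nonneg)).const_add (γ 0)
    refine hd.congr_of_eventuallyEq ?_
    filter_upwards [Ioo_mem_nhds htm.1 htm.2] with s hs
    rw [← (hγ 0 s le_rfl hs.1.le).2, add_sub_cancel]
  filter_upwards [ae_all_iff.2 h] with t ht htpos
  obtain ⟨m, hm⟩ := exists_nat_gt t
  exact ht m ⟨htpos, hm⟩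

end IsLocallyAC

theorem isLocallyAC_iff_forall_isAC {n : ℕ} {γ γ' : ℝ → E n} :
    IsLocallyAC γ γ' ↔ ∀ T : ℝ, 0 < T → IsAC 0 T γ γ' := by
  constructor
  · intro hγ T hT
    refine ⟨?_, fun c d hc hcd _ => (hγ c d hc hcd).2⟩
    exact (intervalIntegrable_iff_integrableOn_Icc_of_le hT.le).1 (hγ 0 T le_rfl hT.le).1
  · intro hγ c d hc hcd
    obtain ⟨hint, hsub⟩ := hγ (d + 1) (by linarith)
    refine ⟨?_, hsub c d hc hcd (by linarith)⟩
    exact (intervalIntegrable_iff_integrableOn_Icc_of_le hcd).2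
      (hint.mono_set (Icc_subset_Icc hc (by linarith)))

section cost

variable {X : Type*} [NormedAddCommGroup X]

def cost (ℓ : X → X → ℝ) (lam : ℝ) (γ γ' : ℝ → X) (s : ℝ) : ℝ :=
  exp (-lam * s) * ℓ (γ s) (-γ' s)

def action (ℓ : X → X → ℝ) (lam : ℝ) (γ γ' : ℝ → X) : ℝ :=
  ∫ s in Ioi 0, cost ℓ lam γ γ' s

variable {ℓ : X → X → ℝ} {K lam t : ℝ} {γ γ' ζ ζ' : ℝ → X}

theorem cost_concat_of_le {s : ℝ} (hs : s ≤ t) :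
    cost ℓ lam (concat t γ ζ) (concat t γ' ζ') s = cost ℓ lam γ γ' s := by
  simp only [cost, concat_of_le hs]

theorem cost_concat_of_lt {s : ℝ} (hs : t < s) :
    cost ℓ lam (concat t γ ζ) (concat t γ' ζ') s = exp (-lam * t) * cost ℓ lam ζ ζ' (s - t) := by
  simp only [cost, concat_of_lt hs, ← mul_assoc, ← exp_add]
  ring_nf

theorem cost_comp_add_right (a s : ℝ) :
    cost ℓ lam (fun s => γ (s + a)) (fun s => γ' (s + a)) s =
      exp (lam * a) * cost ℓ lam γ γ' (s + a) := by
  simp only [cost, ← mul_assoc, ← exp_add]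
  ring_nf

theorem integrableOn_cost_concat (ht : 0 ≤ t)
    (hγ : IntervalIntegrable (cost ℓ lam γ γ') volume 0 t)
    (hζ : IntegrableOn (cost ℓ lam ζ ζ') (Ioi 0)) :
    IntegrableOn (cost ℓ lam (concat t γ ζ) (concat t γ' ζ')) (Ioi 0) := by
  rw [← Ioc_union_Ioi_eq_Ioi ht]
  refine IntegrableOn.union ?_ ?_
  · exact ((intervalIntegrable_iff_integrableOn_Ioc_of_le ht).1 hγ).congr_fun
      (fun s hs => (cost_concat_of_le hs.2).symm) measurableSet_Ioc
  · exact IntegrableOn.congr_fun (((integrableOn_Ioi_comp_sub_iff t).2 hζ).const_mul _)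
      (fun s hs => (cost_concat_of_lt hs).symm) measurableSet_Ioi

theorem action_concat (ht : 0 ≤ t)
    (hγ : IntervalIntegrable (cost ℓ lam γ γ') volume 0 t)
    (hζ : IntegrableOn (cost ℓ lam ζ ζ') (Ioi 0)) :
    action ℓ lam (concat t γ ζ) (concat t γ' ζ') =
      (∫ s in 0..t, cost ℓ lam γ γ' s) + exp (-lam * t) * action ℓ lam ζ ζ' := by
  have hint := integrableOn_cost_concat ht hγ hζ
  rw [action, ← Ioc_union_Ioi_eq_Ioi ht, setIntegral_union (Ioc_disjoint_Ioi le_rfl)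
    measurableSet_Ioi (hint.mono_set Ioc_subset_Ioi_self) (hint.mono_set (Ioi_subset_Ioi ht)),
    setIntegral_congr_fun measurableSet_Ioc fun s hs => cost_concat_of_le hs.2,
    setIntegral_congr_fun measurableSet_Ioi fun s hs => cost_concat_of_lt hs,
    integral_const_mul, integral_Ioi_comp_sub (cost ℓ lam ζ ζ'),
    intervalIntegral.integral_of_le ht, action]

theorem neg_div_le_action (hlam : 0 < lam) (hℓ : ∀ y v, ‖v‖ ^ 2 / 2 - K ≤ ℓ y v)
    (hγ : IntegrableOn (cost ℓ lam γ γ') (Ioi 0)) : -K / lam ≤ action ℓ lam γ γ' := by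
  have hpt : ∀ s ∈ Ioi (0 : ℝ), -K * exp (-lam * s) ≤ cost ℓ lam γ γ' s := fun s _ => by
    have := mul_le_mul_of_nonneg_left (hℓ (γ s) (-γ' s)) (exp_pos (-lam * s)).le
    rw [cost]
    nlinarith [exp_pos (-lam * s), sq_nonneg ‖-γ' s‖]
  have hmono := setIntegral_mono_on
    ((integrableOn_exp_mul_Ioi (neg_lt_zero.2 hlam) 0).const_mul (-K)) hγ measurableSet_Ioi hpt
  rwa [integral_const_mul, integral_exp_mul_Ioi (neg_lt_zero.2 hlam), mul_zero, exp_zero,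
    neg_div_neg_eq, mul_one_div] at hmono

theorem continuous_cost_segment [NormedSpace ℝ X] (hℓc : ∀ v, Continuous fun y => ℓ y v)
    (p u : X) : Continuous (cost ℓ lam (fun s => p + s • u) fun _ => u) :=
  (continuous_exp.comp (continuous_const.mul continuous_id)).mul
    ((hℓc (-u)).comp (continuous_const.add (continuous_id.smul continuous_const)))

theorem integral_cost_segment_le [NormedSpace ℝ X] (hlam : 0 ≤ lam) (hK : 0 ≤ K)
    (hℓ : ∀ y v, ℓ y v ≤ ‖v‖ ^ 2 / 2 + K) (hℓc : ∀ v, Continuous fun y => ℓ y v)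
    (p : X) {u : X} (hu : ‖u‖ = 1) {τ : ℝ} (hτ : 0 ≤ τ) :
    ∫ s in 0..τ, cost ℓ lam (fun s => p + s • u) (fun _ => u) s ≤ (1 / 2 + K) * τ := by
  have hpt : ∀ s ∈ Icc 0 τ, cost ℓ lam (fun s => p + s • u) (fun _ => u) s ≤ 1 / 2 + K := by
    intro s hs
    have hℓs := hℓ (p + s • u) (-u)
    rw [norm_neg, hu] at hℓs
    have hexp : exp (-lam * s) ≤ 1 := exp_le_one_iff.2 (by nlinarith [hs.1])
    rw [cost]
    nlinarith [mul_le_mul_of_nonneg_left hℓs (exp_pos (-lam * s)).le]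
  have := intervalIntegral.integral_mono_on hτ
    ((continuous_cost_segment hℓc p u).intervalIntegrable (μ := volume) 0 τ)
    intervalIntegrable_const hpt
  rwa [intervalIntegral.integral_const, smul_eq_mul, sub_zero, mul_comm] at this

end cost

section admissible

variable {X : Type*} [NormedAddCommGroup X] [NormedSpace ℝ X]

structure IsAdmissible (ℓ : X → X → ℝ) (lam : ℝ) (γ γ' : ℝ → X) : Prop where
  isLocallyAC : IsLocallyAC γ γ'
  integrableOn : IntegrableOn (cost ℓ lam γ γ') (Ioi 0)

structure IsMinimizer (ℓ : X → X → ℝ) (lam : ℝ) (γ γ' : ℝ → X) : Prop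
    extends IsAdmissible ℓ lam γ γ' where
  action_le : ∀ η η' : ℝ → X, IsAdmissible ℓ lam η η' → η 0 = γ 0 →
    action ℓ lam γ γ' ≤ action ℓ lam η η'

variable {ℓ : X → X → ℝ} {K lam t : ℝ} {γ γ' ζ ζ' : ℝ → X}

theorem IsAdmissible.intervalIntegrable_cost (hγ : IsAdmissible ℓ lam γ γ') (ht : 0 ≤ t) :
    IntervalIntegrable (cost ℓ lam γ γ') volume 0 t :=
  (intervalIntegrable_iff_integrableOn_Ioc_of_le ht).2
    (hγ.integrableOn.mono_set Ioc_subset_Ioi_self)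

theorem IsAdmissible.comp_add_right (hγ : IsAdmissible ℓ lam γ γ') (ht : 0 ≤ t) :
    IsAdmissible ℓ lam (fun s => γ (s + t)) (fun s => γ' (s + t)) := by
  refine ⟨hγ.isLocallyAC.comp_add_right ht, ?_⟩
  have hshift : IntegrableOn (fun s => cost ℓ lam γ γ' (s + t)) (Ioi 0) := by
    rw [← integrableOn_Ioi_comp_sub_iff t]
    simpa using hγ.integrableOn.mono_set (Ioi_subset_Ioi ht)
  exact IntegrableOn.congr_fun (hshift.const_mul _) (fun s _ => (cost_comp_add_right t s).symm)
    measurableSet_Ioi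

theorem isAdmissible_concat (hγ : IsLocallyAC γ γ')
    (hγi : IntervalIntegrable (cost ℓ lam γ γ') volume 0 t) (ht : 0 ≤ t)
    (hζ : IsAdmissible ℓ lam ζ ζ') (hmatch : ζ 0 = γ t) :
    IsAdmissible ℓ lam (concat t γ ζ) (concat t γ' ζ') :=
  ⟨isLocallyAC_concat hγ hζ.isLocallyAC hmatch, integrableOn_cost_concat ht hγi hζ.integrableOn⟩

theorem IsAdmissible.action_eq_add_action_comp_add_right (hγ : IsAdmissible ℓ lam γ γ')
    (ht : 0 ≤ t) :
    action ℓ lam γ γ' = (∫ s in 0..t, cost ℓ lam γ γ' s) +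
      exp (-lam * t) * action ℓ lam (fun s => γ (s + t)) (fun s => γ' (s + t)) := by
  conv_lhs => rw [← concat_comp_add_right_self (t := t) (γ := γ),
    ← concat_comp_add_right_self (t := t) (γ := γ')]
  exact action_concat ht (hγ.intervalIntegrable_cost ht) (hγ.comp_add_right ht).integrableOn

theorem IsMinimizer.comp_add_right (hγ : IsMinimizer ℓ lam γ γ') (ht : 0 ≤ t) :
    IsMinimizer ℓ lam (fun s => γ (s + t)) (fun s => γ' (s + t)) := by
  refine ⟨hγ.toIsAdmissible.comp_add_right ht, fun η η' hη hη0 => ?_⟩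
  have hη0' : η 0 = γ t := by simpa using hη0
  have hγi := hγ.toIsAdmissible.intervalIntegrable_cost ht
  have hle := hγ.action_le _ _ (isAdmissible_concat hγ.isLocallyAC hγi ht hη hη0')
    (concat_of_le ht)
  rw [hγ.toIsAdmissible.action_eq_add_action_comp_add_right ht,
    action_concat ht hγi hη.integrableOn] at hle
  exact le_of_mul_le_mul_left (by linarith) (exp_pos _)

theorem le_integral_cost (hlam : 0 ≤ lam) (hK : 0 ≤ K) (hℓ : ∀ y v, ‖v‖ ^ 2 / 2 - K ≤ ℓ y v)
    (hγ : IsLocallyAC γ γ') {h : ℝ} (hh : 0 < h)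
    (hγi : IntervalIntegrable (cost ℓ lam γ γ') volume 0 h) :
    exp (-lam * h) * (‖γ h - γ 0‖ ^ 2 / (2 * h)) - K * h ≤ ∫ s in 0..h, cost ℓ lam γ γ' s := by
  set δ := ‖γ h - γ 0‖
  set m := δ / h
  -- AM-GM `m ‖v‖ - m² / 2 ≤ ‖v‖² / 2` bounds the cost below by a function linear in `‖γ'‖`,
  -- whose integral is controlled by `δ ≤ ∫ ‖γ'‖`
  have hpt : ∀ s ∈ Icc 0 h,
      exp (-lam * h) * m * ‖γ' s‖ - (exp (-lam * h) * m ^ 2 / 2 + K) ≤ cost ℓ lam γ γ' s := by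
    intro s hs
    have hℓs := hℓ (γ s) (-γ' s)
    rw [norm_neg] at hℓs
    have hexp : exp (-lam * h) ≤ exp (-lam * s) := exp_le_exp.2 (by nlinarith [hs.2])
    have hexp1 : exp (-lam * s) ≤ 1 := exp_le_one_iff.2 (by nlinarith [hs.1])
    rw [cost]
    nlinarith [mul_le_mul_of_nonneg_left hℓs (exp_pos (-lam * s)).le,
      mul_le_mul_of_nonneg_right hexp (sq_nonneg ‖γ' s‖), mul_le_mul_of_nonneg_right hexp1 hK,
      mul_nonneg (exp_pos (-lam * h)).le (sq_nonneg (‖γ' s‖ - m))]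
  obtain ⟨hγ'i, hsub⟩ := hγ 0 h le_rfl hh.le
  have hδ : δ ≤ ∫ s in 0..h, ‖γ' s‖ :=
    (congrArg norm hsub).trans_le (intervalIntegral.norm_integral_le_integral_norm hh.le)
  have hm : 0 ≤ exp (-lam * h) * m := by positivity
  calc exp (-lam * h) * (δ ^ 2 / (2 * h)) - K * h
      = exp (-lam * h) * m * δ - h * (exp (-lam * h) * m ^ 2 / 2 + K) := by
        simp only [m]
        field_simp
        ring
    _ ≤ exp (-lam * h) * m * (∫ s in 0..h, ‖γ' s‖) - h * (exp (-lam * h) * m ^ 2 / 2 + K) := by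
        gcongr
    _ = ∫ s in 0..h, (exp (-lam * h) * m * ‖γ' s‖ - (exp (-lam * h) * m ^ 2 / 2 + K)) := by
        rw [intervalIntegral.integral_sub (hγ'i.norm.const_mul _) intervalIntegrable_const,
          intervalIntegral.integral_const_mul, intervalIntegral.integral_const, smul_eq_mul,
          sub_zero]
    _ ≤ ∫ s in 0..h, cost ℓ lam γ γ' s :=
        intervalIntegral.integral_mono_on hh.le
          ((hγ'i.norm.const_mul _).sub intervalIntegrable_const) hγi hpt

end admissible

section minimizer

variable {X : Type*} [NormedAddCommGroup X] [NormedSpace ℝ X] [CompleteSpace X]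
  {ℓ : X → X → ℝ} {K lam : ℝ} {γ γ' : ℝ → X}
  (hK : 0 ≤ K) (hlam : 0 < lam) (hℓc : ∀ v, Continuous fun y => ℓ y v)
  (hℓ : ∀ y v, ‖v‖ ^ 2 / 2 - K ≤ ℓ y v ∧ ℓ y v ≤ ‖v‖ ^ 2 / 2 + K)
include hK hlam hℓc hℓ

theorem IsMinimizer.sq_norm_sub_div_le (hγ : IsMinimizer ℓ lam γ γ') {h : ℝ} (hh : 0 < h)
    (hδ : h ≤ ‖γ h - γ 0‖) :
    exp (-lam * h) * (‖γ h - γ 0‖ ^ 2 / (2 * h)) ≤ (1 / 2 + 2 * K) * ‖γ h - γ 0‖ + K * h := by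
  set δ := ‖γ h - γ 0‖
  have hδ0 : 0 < δ := hh.trans_le hδ
  set u := δ⁻¹ • (γ h - γ 0)
  have hu : ‖u‖ = 1 := by
    rw [norm_smul, norm_inv, norm_norm, inv_mul_cancel₀ hδ0.ne']
  have hmatch : γ (0 + h) = γ 0 + δ • u := by
    rw [smul_inv_smul₀ hδ0.ne', zero_add, add_sub_cancel]
  have htail := hγ.comp_add_right hh.le
  have hsegi := (continuous_cost_segment (lam := lam) hℓc (γ 0) u).intervalIntegrable
    (μ := volume) 0 δ
  have hle := hγ.action_le _ _ (isAdmissible_concat (isLocallyAC_segment (γ 0) u) hsegi hδ0.le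
    htail.toIsAdmissible hmatch) (by rw [concat_of_le hδ0.le, zero_smul, add_zero])
  rw [hγ.toIsAdmissible.action_eq_add_action_comp_add_right hh.le,
    action_concat hδ0.le hsegi htail.integrableOn] at hle
  have hA := le_integral_cost hlam.le hK (fun y v => (hℓ y v).1) hγ.isLocallyAC hh
    (hγ.toIsAdmissible.intervalIntegrable_cost hh.le)
  have hB := integral_cost_segment_le hlam.le hK (fun y v => (hℓ y v).2) hℓc (γ 0) hu hδ0.le
  have hJ := neg_div_le_action hlam (fun y v => (hℓ y v).1) htail.integrableOn
  have hexp : exp (-lam * h) - exp (-lam * δ) ≤ lam * (δ - h) := by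
    have h1 := add_one_le_exp (-lam * (δ - h))
    have h2 : exp (-lam * δ) = exp (-lam * h) * exp (-lam * (δ - h)) := by
      rw [← exp_add]; ring_nf
    have h3 : exp (-lam * h) ≤ 1 := exp_le_one_iff.2 (by nlinarith)
    nlinarith [exp_pos (-lam * h), mul_nonneg hlam.le (sub_nonneg.2 hδ)]
  have hexp0 : 0 ≤ exp (-lam * h) - exp (-lam * δ) :=
    sub_nonneg.2 (exp_le_exp.2 (by nlinarith))
  -- delaying the tail by `δ - h` costs at most `K (δ - h)`, because its action is `≥ -K / λ`
  have hdelay : -(K * (δ - h)) ≤ (exp (-lam * h) - exp (-lam * δ)) *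
      action ℓ lam (fun s => γ (s + h)) (fun s => γ' (s + h)) := by
    refine le_trans ?_ (mul_le_mul_of_nonneg_left hJ hexp0)
    rw [mul_div_assoc', le_div_iff₀ hlam]
    nlinarith [mul_le_mul_of_nonneg_left hexp hK]
  nlinarith

theorem IsMinimizer.norm_le_of_hasDerivAt (hγ : IsMinimizer ℓ lam γ γ') {v : X}
    (hv : HasDerivAt γ v 0) : ‖v‖ ≤ 4 + 8 * K := by
  by_contra! hlt
  have hdisp : ∀ᶠ h in 𝓝[>] 0, (‖v‖ - 1) * h ≤ ‖γ h - γ 0‖ := by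
    have := (hasDerivAt_iff_isLittleO_nhds_zero.1 hv).def one_pos
    filter_upwards [nhdsWithin_le_nhds this, self_mem_nhdsWithin] with h hh (hpos : 0 < h)
    rw [zero_add, one_mul, Real.norm_of_nonneg hpos.le] at hh
    have := norm_sub_norm_le (h • v) (γ h - γ 0)
    rw [norm_smul, Real.norm_of_nonneg hpos.le, norm_sub_rev (h • v)] at this
    linarith
  have hexp : ∀ᶠ h in 𝓝[>] 0, 1 / 2 ≤ exp (-lam * h) := by
    have hcont : Tendsto (fun h : ℝ => exp (-lam * h)) (𝓝 0) (𝓝 1) := by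
      have : Continuous fun h : ℝ => exp (-lam * h) := by fun_prop
      simpa using this.tendsto 0
    exact nhdsWithin_le_nhds (hcont.eventually (le_mem_nhds (by norm_num)))
  obtain ⟨h, hd, he, hh : 0 < h⟩ := (hdisp.and (hexp.and self_mem_nhdsWithin)).exists
  have hδ : h ≤ ‖γ h - γ 0‖ := by nlinarith
  have key := hγ.sq_norm_sub_div_le hK hlam hℓc hℓ hh hδ
  set δ := ‖γ h - γ 0‖
  have hquad : δ ^ 2 ≤ (2 + 8 * K) * h * δ + 4 * K * h ^ 2 := by
    rw [mul_div_assoc', div_le_iff₀ (by positivity)] at key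
    nlinarith
  have hfast : (3 + 8 * K) * h < δ := by nlinarith
  nlinarith [mul_lt_mul_of_pos_right hfast (hh.trans_le hδ)]

theorem IsMinimizer.ae_norm_le (hγ : IsMinimizer ℓ lam γ γ') :
    ∀ᵐ s ∂volume.restrict (Ioi 0), ‖γ' s‖ ≤ 4 + 8 * K := by
  filter_upwards [ae_restrict_of_ae hγ.isLocallyAC.ae_hasDerivAt,
    ae_restrict_mem measurableSet_Ioi] with t hderiv (ht : 0 < t)
  exact (hγ.comp_add_right ht.le).norm_le_of_hasDerivAt hK hlam hℓc hℓ
    (HasDerivAt.comp_add_const 0 t (by rw [zero_add]; exact hderiv ht))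

end minimizer

end DiscountedControl

theorem stmt_5_general (n : ℕ) (K0 : ℝ) (hK0 : 0 < K0) :
    ∃ M0 : ℝ, 0 < M0 ∧
      ∀ L : E n → E n → E n → ℝ,
        Continuous (fun q : E n × E n × E n => L q.1 q.2.1 q.2.2) →
        (∀ (x y v : E n) (k : Fin n → ℤ), L x (y + intVec n k) v = L x y v) →
        (∀ x y, ConvexOn ℝ univ (fun v => L x y v)) →
        (∀ x y v, ‖v‖ ^ 2 / 2 - K0 ≤ L x y v ∧ L x y v ≤ ‖v‖ ^ 2 / 2 + K0) →
        ∀ (x : E n) (lam ε : ℝ), 0 < lam → 0 < ε →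
        ∀ γ γ' : ℝ → E n, (∀ T : ℝ, 0 < T → IsAC 0 T γ γ') → γ 0 = x →
          IntegrableOn (fun s => Real.exp (-lam * s) * L (γ s) (ε⁻¹ • γ s) (-γ' s))
            (Ioi 0) volume →
          (∀ η η' : ℝ → E n, (∀ T : ℝ, 0 < T → IsAC 0 T η η') → η 0 = x →
            IntegrableOn (fun s => Real.exp (-lam * s) * L (η s) (ε⁻¹ • η s) (-η' s))
              (Ioi 0) volume →
            (∫ s in Ioi (0:ℝ), Real.exp (-lam * s) * L (γ s) (ε⁻¹ • γ s) (-γ' s)) ≤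
              ∫ s in Ioi (0:ℝ), Real.exp (-lam * s) * L (η s) (ε⁻¹ • η s) (-η' s)) →
          ∀ᵐ s ∂(volume.restrict (Ioi (0:ℝ))), ‖γ' s‖ ≤ M0 := by
  refine ⟨4 + 8 * K0, by positivity, ?_⟩
  intro L hLc _ _ hLbd x lam ε hlam _ γ γ' hγ hγ0 hint hmin
  subst hγ0
  have hℓc : ∀ v, Continuous fun y => L y (ε⁻¹ • y) v := fun v =>
    hLc.comp (continuous_id.prodMk ((continuous_const_smul _).prodMk continuous_const))
  have hmin' : DiscountedControl.IsMinimizer (fun y v => L y (ε⁻¹ • y) v) lam γ γ' :=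
    ⟨⟨DiscountedControl.isLocallyAC_iff_forall_isAC.2 hγ, hint⟩, fun η η' hη hη0 =>
      hmin η η' (DiscountedControl.isLocallyAC_iff_forall_isAC.1 hη.isLocallyAC) hη0
        hη.integrableOn⟩
  exact hmin'.ae_norm_le hK0.le hlam hℓc fun y v => hLbd y _ v

/-- Lemma 3.1: minimizing curves of the discounted optimal control functional have
velocity bounded a.e. by a constant `M0 = M0(n, K0)`, uniformly in `ε` and `λ`. -/
theorem stmt_5 (n : ℕ) (hn : 1 ≤ n) (K0 : ℝ) (hK0 : 0 < K0) :
    ∃ M0 : ℝ, 0 < M0 ∧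
      ∀ L : E n → E n → E n → ℝ,
        Continuous (fun q : E n × E n × E n => L q.1 q.2.1 q.2.2) →
        (∀ (x y v : E n) (k : Fin n → ℤ), L x (y + intVec n k) v = L x y v) →
        (∀ x y, ConvexOn ℝ univ (fun v => L x y v)) →
        (∀ x y v, ‖v‖ ^ 2 / 2 - K0 ≤ L x y v ∧ L x y v ≤ ‖v‖ ^ 2 / 2 + K0) →
        ∀ (x : E n) (lam ε : ℝ), 0 < lam → 0 < ε →
        ∀ γ γ' : ℝ → E n, (∀ T : ℝ, 0 < T → IsAC 0 T γ γ') → γ 0 = x →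
          IntegrableOn (fun s => Real.exp (-lam * s) * L (γ s) (ε⁻¹ • γ s) (-γ' s))
            (Ioi 0) volume →
          (∀ η η' : ℝ → E n, (∀ T : ℝ, 0 < T → IsAC 0 T η η') → η 0 = x →
            IntegrableOn (fun s => Real.exp (-lam * s) * L (η s) (ε⁻¹ • η s) (-η' s))
              (Ioi 0) volume →
            (∫ s in Ioi (0:ℝ), Real.exp (-lam * s) * L (γ s) (ε⁻¹ • γ s) (-γ' s)) ≤
              ∫ s in Ioi (0:ℝ), Real.exp (-lam * s) * L (η s) (ε⁻¹ • η s) (-η' s)) →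
          ∀ᵐ s ∂(volume.restrict (Ioi (0:ℝ))), ‖γ' s‖ ≤ M0 :=
  stmt_5_general n K0 hK0
end
end

section
/- Let V : ℝ → ℝ be continuous, 1-periodic, with V ≥ 0 on ℝ and V(y) ≥ 1 for every y ∈ [−1/3, 1/3]. Then for every ε ∈ (0,1), every t > 0, and every absolutely continuous curve η : [0, t/ε] → ℝ with η(0) = 0, one has ε ∫₀^{t/ε} ( V(η(s)) + |η̇(s)|²/2 ) ds ≥ (√2/3) · min{t, ε}. -/
open MeasureTheory Real Set

noncomputable section

/-- `η : [a,b] → ℝ` is absolutely continuous with (a.e.) derivative `η'`. -/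
def IsAC1 (a b : ℝ) (η η' : ℝ → ℝ) : Prop :=
  IntegrableOn η' (Icc a b) volume ∧
    ∀ c d : ℝ, a ≤ c → c ≤ d → d ≤ b → η d - η c = ∫ s in c..d, η' s

/-!
While the curve stays in `[-1/3, 1/3]` the potential costs at least `1` per unit time, so a curve
that never leaves this interval pays at least `t/ε`. A curve that leaves it must first travel a
distance `1/3` through the region where `V ≥ 1`, and there `1 + |η̇|²/2 ≥ √2 |η̇|` (AM-GM), so it pays
at least `√2/3`. After multiplying by `ε`, both bounds dominate `(√2/3) · min{t, ε}`.
-/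

lemma sqrt_two_mul_abs_le_one_add_sq_div_two (a : ℝ) : √2 * |a| ≤ 1 + |a| ^ 2 / 2 := by
  have h := two_mul_le_add_sq (√2) |a|
  rw [sq_sqrt zero_le_two] at h
  linarith

namespace IsAC1

variable {a b : ℝ} {η η' : ℝ → ℝ}

lemma continuousOn (h : IsAC1 a b η η') : ContinuousOn η (Icc a b) := by
  rcases lt_or_ge b a with hba | hab
  · simp [Icc_eq_empty_of_lt hba]
  have hprim : ContinuousOn (fun d => η a + ∫ s in a..d, η' s) (Icc a b) := by
    have := intervalIntegral.continuousOn_primitive_interval (μ := volume)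
      (h.1.mono_set (uIcc_of_le hab).subset)
    rw [uIcc_of_le hab] at this
    exact continuousOn_const.add this
  refine hprim.congr fun d hd => ?_
  have := h.2 a d le_rfl hd.1 hd.2
  simp only
  linarith

lemma abs_sub_le_integral_Ioo (h : IsAC1 a b η η') {c d : ℝ} (hac : a ≤ c) (hcd : c ≤ d)
    (hdb : d ≤ b) : |η d - η c| ≤ ∫ s in Ioo c d, |η' s| := by
  rw [h.2 c d hac hcd hdb, ← integral_Ioc_eq_integral_Ioo,
    ← intervalIntegral.integral_of_le hcd]
  exact intervalIntegral.abs_integral_le_integral_abs hcd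

end IsAC1

lemma ContinuousOn.exists_first_le_abs {f : ℝ → ℝ} {a b r : ℝ} (hf : ContinuousOn f (Icc a b))
    (h : ∃ s ∈ Icc a b, r ≤ |f s|) :
    ∃ s₀ ∈ Icc a b, r ≤ |f s₀| ∧ ∀ s ∈ Ico a s₀, |f s| < r := by
  set K := {s ∈ Icc a b | r ≤ |f s|}
  have hK : IsCompact K :=
    isCompact_Icc.of_isClosed_subset
      (hf.preimage_isClosed_of_isClosed isClosed_Icc (isClosed_le continuous_const continuous_abs))
      (sep_subset _ _)
  obtain ⟨s₀, ⟨hs₀, hrs₀⟩, hleast⟩ := hK.exists_isLeast h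
  refine ⟨s₀, hs₀, hrs₀, fun s hs => not_le.mp fun hrs => ?_⟩
  exact (hleast ⟨⟨hs.1, hs.2.le.trans hs₀.2⟩, hrs⟩).not_gt hs.2

section Action

variable {V η η' : ℝ → ℝ}

lemma ofReal_sub_le_lintegral_action {a b : ℝ} (hV : ∀ s ∈ Icc a b, 1 ≤ V (η s)) :
    ENNReal.ofReal (b - a) ≤ ∫⁻ s in Icc a b, ENNReal.ofReal (V (η s) + |η' s| ^ 2 / 2) := by
  calc ENNReal.ofReal (b - a) = ∫⁻ _ in Icc a b, ENNReal.ofReal 1 := by simp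
    _ ≤ _ := setLIntegral_mono' measurableSet_Icc fun s hs =>
        ENNReal.ofReal_le_ofReal (by linarith [hV s hs, sq_nonneg |η' s|])

lemma ofReal_sqrt_two_mul_le_lintegral_action {r T : ℝ} (hV : ∀ y ∈ Icc (-r) r, 1 ≤ V y)
    (hη : IsAC1 0 T η η') (hη0 : η 0 = 0) (hexit : ∃ s ∈ Icc 0 T, r ≤ |η s|) :
    ENNReal.ofReal (√2 * r) ≤ ∫⁻ s in Icc 0 T, ENNReal.ofReal (V (η s) + |η' s| ^ 2 / 2) := by
  obtain ⟨s₀, hs₀, hrs₀, hinside⟩ := hη.continuousOn.exists_first_le_abs hexit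
  have hdist : r ≤ ∫ s in Ioo 0 s₀, |η' s| := by
    have := hη.abs_sub_le_integral_Ioo le_rfl hs₀.1 hs₀.2
    rw [hη0, sub_zero] at this
    exact hrs₀.trans this
  have hint : IntegrableOn (fun s => √2 * |η' s|) (Ioo 0 s₀) :=
    ((hη.1.mono_set (Ioo_subset_Icc_self.trans (Icc_subset_Icc_right hs₀.2))).abs).const_mul _
  calc ENNReal.ofReal (√2 * r)
      ≤ ENNReal.ofReal (∫ s in Ioo 0 s₀, √2 * |η' s|) := by
        rw [integral_const_mul]
        exact ENNReal.ofReal_le_ofReal (mul_le_mul_of_nonneg_left hdist (sqrt_nonneg 2))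
    _ = ∫⁻ s in Ioo 0 s₀, ENNReal.ofReal (√2 * |η' s|) :=
        ofReal_integral_eq_lintegral_ofReal hint (.of_forall fun _ => by positivity)
    _ ≤ ∫⁻ s in Ioo 0 s₀, ENNReal.ofReal (V (η s) + |η' s| ^ 2 / 2) := by
        refine setLIntegral_mono' measurableSet_Ioo fun s hs => ?_
        have hVs : 1 ≤ V (η s) := hV _ (abs_le.mp (hinside s (Ioo_subset_Ico_self hs)).le)
        exact ENNReal.ofReal_le_ofReal (by linarith [sqrt_two_mul_abs_le_one_add_sq_div_two (η' s)])
    _ ≤ _ := lintegral_mono_set (Ioo_subset_Icc_self.trans (Icc_subset_Icc_right hs₀.2))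

lemma ofReal_min_le_lintegral_action {r T : ℝ} (hV : ∀ y ∈ Icc (-r) r, 1 ≤ V y)
    (hη : IsAC1 0 T η η') (hη0 : η 0 = 0) :
    ENNReal.ofReal (min (√2 * r) T) ≤
      ∫⁻ s in Icc 0 T, ENNReal.ofReal (V (η s) + |η' s| ^ 2 / 2) := by
  by_cases hexit : ∃ s ∈ Icc 0 T, r ≤ |η s|
  · exact (ENNReal.ofReal_le_ofReal (min_le_left _ _)).trans
      (ofReal_sqrt_two_mul_le_lintegral_action hV hη hη0 hexit)
  · push Not at hexit
    exact (ENNReal.ofReal_le_ofReal ((min_le_right _ _).trans (sub_zero T).ge)).trans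
      (ofReal_sub_le_lintegral_action fun s hs => hV _ (abs_le.mp (hexit s hs).le))

end Action

theorem stmt_6_general (V : ℝ → ℝ) (hVone : ∀ y ∈ Icc (-(1:ℝ)/3) (1/3), 1 ≤ V y) :
    ∀ ε : ℝ, 0 < ε → ε < 1 → ∀ t : ℝ, 0 < t →
      ∀ η η' : ℝ → ℝ, IsAC1 0 (t / ε) η η' → η 0 = 0 →
        ENNReal.ofReal (Real.sqrt 2 / 3 * min t ε) ≤
          ENNReal.ofReal ε *
            ∫⁻ s in Icc (0:ℝ) (t / ε), ENNReal.ofReal (V (η s) + |η' s| ^ 2 / 2) := by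
  intro ε hε _ t ht η η' hη hη0
  have hV : ∀ y ∈ Icc (-(1 / 3)) (1 / 3), 1 ≤ V y := by rwa [← neg_div]
  have hsqrt : √2 ≤ 3 := by nlinarith [sq_sqrt (zero_le_two (α := ℝ)), sqrt_nonneg 2]
  have hscale : √2 / 3 * min t ε ≤ ε * min (√2 * (1 / 3)) (t / ε) := by
    rw [mul_min_of_nonneg _ _ hε.le, mul_div_cancel₀ t hε.ne']
    refine le_min ?_ ?_
    · nlinarith [min_le_right t ε, sqrt_nonneg 2]
    · nlinarith [min_le_left t ε, le_min ht.le hε.le]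
  calc ENNReal.ofReal (√2 / 3 * min t ε)
      ≤ ENNReal.ofReal ε * ENNReal.ofReal (min (√2 * (1 / 3)) (t / ε)) := by
        rw [← ENNReal.ofReal_mul hε.le]
        exact ENNReal.ofReal_le_ofReal hscale
    _ ≤ _ := mul_le_mul_right (ofReal_min_le_lintegral_action hV hη hη0) _

/-- Proposition 4.1 (variational content): for a potential `V ≥ 0` with `V ≥ 1` on
`[−1/3, 1/3]`, every admissible curve starting at `0` has rescaled cost at least
`(√2/3)·min{t, ε}`.  The cost integral is taken in `[0,∞]` since the integrand is
nonnegative. -/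
theorem stmt_6 (V : ℝ → ℝ) (hVcont : Continuous V) (hVper : Function.Periodic V 1)
    (hVnonneg : ∀ y, 0 ≤ V y) (hVone : ∀ y ∈ Icc (-(1:ℝ)/3) (1/3), 1 ≤ V y) :
    ∀ ε : ℝ, 0 < ε → ε < 1 → ∀ t : ℝ, 0 < t →
      ∀ η η' : ℝ → ℝ, IsAC1 0 (t / ε) η η' → η 0 = 0 →
        ENNReal.ofReal (Real.sqrt 2 / 3 * min t ε) ≤
          ENNReal.ofReal ε *
            ∫⁻ s in Icc (0:ℝ) (t / ε), ENNReal.ofReal (V (η s) + |η' s| ^ 2 / 2) :=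
  stmt_6_general V hVone
end
end

section
/- Let V : ℝ → ℝ satisfy V ≥ 0 on ℝ and V(y) ≥ 1 for every y ∈ [−1/3, 1/3]. Let s₁ > 0 and let η : [0, s₁] → ℝ be absolutely continuous with η(0) = 0, η(s₁) = 1/3, and η(s) ∈ (−1/3, 1/3) for all s ∈ [0, s₁). Then ∫₀^{s₁} ( V(η(s)) + |η̇(s)|²/2 ) ds ≥ s₁ + 1/(18 s₁) ≥ √2/3. -/
open MeasureTheory Real Set

noncomputable section

/-!
On `[0, s₁]` the potential contributes at least `s₁`, since the curve stays in `[-1/3, 1/3]`.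
For the kinetic part, the tangent-line bound `c t - c²/2 ≤ t²/2` gives
`∫ |η̇|²/2 ≥ c ∫ |η̇| - c² s₁/2 ≥ c/3 - c² s₁/2`, because the curve travels a distance `1/3`;
the choice `c = 1/(3 s₁)` yields `1/(18 s₁)`. The bound `√2/3` is AM–GM.
-/

theorem ofReal_integral_le_lintegral_ofReal {α : Type*} [MeasurableSpace α] {μ : Measure α}
    {f : α → ℝ} (hf : Integrable f μ) :
    ENNReal.ofReal (∫ x, f x ∂μ) ≤ ∫⁻ x, ENNReal.ofReal (f x) ∂μ :=
  calc ENNReal.ofReal (∫ x, f x ∂μ)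
      ≤ ENNReal.ofReal (∫⁻ x, ENNReal.ofReal (f x) ∂μ).toReal := by
        rw [integral_eq_lintegral_pos_part_sub_lintegral_neg_part hf]
        exact ENNReal.ofReal_le_ofReal (sub_le_self _ ENNReal.toReal_nonneg)
    _ ≤ ∫⁻ x, ENNReal.ofReal (f x) ∂μ := ENNReal.ofReal_toReal_le

theorem ofReal_le_lintegral_add_sq_div_two {α : Type*} [MeasurableSpace α] {μ : Measure α}
    [IsFiniteMeasure μ] {W f : α → ℝ} (hW : ∀ᵐ x ∂μ, 1 ≤ W x) (hf : Integrable f μ) (c : ℝ) :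
    ENNReal.ofReal (μ.real univ + c * ∫ x, |f x| ∂μ - c ^ 2 / 2 * μ.real univ) ≤
      ∫⁻ x, ENNReal.ofReal (W x + |f x| ^ 2 / 2) ∂μ := by
  have hlin : Integrable (fun x => 1 + c * |f x|) μ :=
    (integrable_const 1).add (hf.abs.const_mul c)
  have hint : Integrable (fun x => 1 + c * |f x| - c ^ 2 / 2) μ := hlin.sub (integrable_const _)
  have hpt : ∀ᵐ x ∂μ, 1 + c * |f x| - c ^ 2 / 2 ≤ W x + |f x| ^ 2 / 2 :=
    hW.mono fun x hx => by nlinarith [sq_nonneg (|f x| - c)]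
  calc ENNReal.ofReal (μ.real univ + c * ∫ x, |f x| ∂μ - c ^ 2 / 2 * μ.real univ)
      = ENNReal.ofReal (∫ x, (1 + c * |f x| - c ^ 2 / 2) ∂μ) := by
        rw [integral_sub hlin (integrable_const _),
          integral_add (integrable_const 1) (hf.abs.const_mul c), integral_const_mul,
          integral_const, integral_const, smul_eq_mul, smul_eq_mul, mul_one, mul_comm (c ^ 2 / 2)]
    _ ≤ ∫⁻ x, ENNReal.ofReal (1 + c * |f x| - c ^ 2 / 2) ∂μ :=
        ofReal_integral_le_lintegral_ofReal hint
    _ ≤ ∫⁻ x, ENNReal.ofReal (W x + |f x| ^ 2 / 2) ∂μ :=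
        lintegral_mono_ae (hpt.mono fun x hx => ENNReal.ofReal_le_ofReal hx)

theorem IsAC1.abs_sub_le_integral_abs {a b : ℝ} {η η' : ℝ → ℝ} (hAC : IsAC1 a b η η')
    (hab : a ≤ b) : |η b - η a| ≤ ∫ s in Icc a b, |η' s| := by
  rw [hAC.2 a b le_rfl hab le_rfl, integral_Icc_eq_integral_Ioc,
    ← intervalIntegral.integral_of_le hab]
  exact intervalIntegral.abs_integral_le_integral_abs hab

theorem two_mul_sqrt_le_add_div {a s : ℝ} (ha : 0 ≤ a) (hs : 0 < s) :
    2 * √a ≤ s + a / s := by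
  rw [← sub_nonneg, show s + a / s - 2 * √a = (s - √a) ^ 2 / s by
    field_simp; ring_nf; rw [sq_sqrt ha]]
  positivity

theorem stmt_7_general (V : ℝ → ℝ)
    (hVone : ∀ y ∈ Icc (-(1:ℝ)/3) (1/3), 1 ≤ V y)
    (s₁ : ℝ) (hs₁ : 0 < s₁) (η η' : ℝ → ℝ) (hAC : IsAC1 0 s₁ η η')
    (h0 : η 0 = 0) (h1 : η s₁ = 1/3)
    (hmid : ∀ s ∈ Ico (0:ℝ) s₁, η s ∈ Ioo (-(1:ℝ)/3) (1/3)) :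
    ENNReal.ofReal (s₁ + 1 / (18 * s₁)) ≤
        (∫⁻ s in Icc (0:ℝ) s₁, ENNReal.ofReal (V (η s) + |η' s| ^ 2 / 2)) ∧
      Real.sqrt 2 / 3 ≤ s₁ + 1 / (18 * s₁) := by
  have hrange : ∀ s ∈ Icc (0:ℝ) s₁, η s ∈ Icc (-(1:ℝ)/3) (1/3) := by
    intro s hs
    rcases hs.2.eq_or_lt with rfl | hlt
    · rw [h1]; norm_num
    · exact Ioo_subset_Icc_self (hmid s ⟨hs.1, hlt⟩)
  have hdist : 1 / 3 ≤ ∫ s in Icc 0 s₁, |η' s| := by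
    simpa [h0, h1] using hAC.abs_sub_le_integral_abs hs₁.le
  have hcost := ofReal_le_lintegral_add_sq_div_two (μ := volume.restrict (Icc 0 s₁))
    ((ae_restrict_mem measurableSet_Icc).mono fun s hs => hVone _ (hrange s hs)) hAC.1
    (1 / (3 * s₁))
  rw [measureReal_restrict_apply_univ, Real.volume_real_Icc_of_le hs₁.le, sub_zero] at hcost
  refine ⟨(ENNReal.ofReal_le_ofReal ?_).trans hcost, ?_⟩
  · have hkin := mul_le_mul_of_nonneg_left hdist (by positivity : 0 ≤ 1 / (3 * s₁))
    have hopt : 1 / (3 * s₁) * (1 / 3) - (1 / (3 * s₁)) ^ 2 / 2 * s₁ = 1 / (18 * s₁) := by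
      field_simp; ring
    linarith
  · calc √2 / 3 = 2 * √(1 / 18) := by
          rw [show (1 : ℝ) / 18 = (√2 / 6) ^ 2 by rw [div_pow, sq_sqrt zero_le_two]; norm_num,
            sqrt_sq (by positivity)]
          ring
      _ ≤ s₁ + 1 / (18 * s₁) := by
          rw [← div_div]
          exact two_mul_sqrt_le_add_div (by norm_num) hs₁

/-- Exit-cost estimate from the proof of Proposition 4.1: a curve starting at `0`
that first reaches `1/3` at time `s₁` pays running cost at least `s₁ + 1/(18 s₁)`,
which is at least `√2/3` by AM–GM.  The cost integral is taken in `[0,∞]` since the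
integrand is nonnegative. -/
theorem stmt_7 (V : ℝ → ℝ) (hVnonneg : ∀ y, 0 ≤ V y)
    (hVone : ∀ y ∈ Icc (-(1:ℝ)/3) (1/3), 1 ≤ V y)
    (s₁ : ℝ) (hs₁ : 0 < s₁) (η η' : ℝ → ℝ) (hAC : IsAC1 0 s₁ η η')
    (h0 : η 0 = 0) (h1 : η s₁ = 1/3)
    (hmid : ∀ s ∈ Ico (0:ℝ) s₁, η s ∈ Ioo (-(1:ℝ)/3) (1/3)) :
    ENNReal.ofReal (s₁ + 1 / (18 * s₁)) ≤
        (∫⁻ s in Icc (0:ℝ) s₁, ENNReal.ofReal (V (η s) + |η' s| ^ 2 / 2)) ∧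
      Real.sqrt 2 / 3 ≤ s₁ + 1 / (18 * s₁) :=
  stmt_7_general V hVone s₁ hs₁ η η' hAC h0 h1 hmid
end
end
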